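/- Let ⫝ be an invariant ternary relation on small subsets of the monster model 𝕄 of a complete theory T, satisfying monotonicity and base monotonicity. Then ⫝ preserves algebraic closure if and only if ⫝ has algebraic extension and satisfies both axiom (i) and axiom (ii). -/

import Mathlib

open FirstOrder FirstOrder.Language Set Cardinal

universe u v w x

namespace PaperDiv

variable (L : FirstOrder.Language.{u, v}) (M : Type w) [L.Structure M]

/-- Two (possibly infinite) tuples have the same complete type over the parameter set `C`. -/
def SameType (C : Set M) {ι : Type x} (a b : ι → M) : Prop :=
  ∀ (n : ℕ) (φ : L.Formula (ι ⊕ Fin n)) (c : Fin n → M),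
    (∀ i, c i ∈ C) → (φ.Realize (Sum.elim a c) ↔ φ.Realize (Sum.elim b c))

/-- The model-theoretic algebraic closure of a set `C`. -/
def acl (C : Set M) : Set M :=
  {a | ∃ (n : ℕ) (φ : L.Formula (Fin (n + 1))) (c : Fin n → M),
    (∀ i, c i ∈ C) ∧ φ.Realize (Fin.cons a c) ∧ {x : M | φ.Realize (Fin.cons x c)}.Finite}

/-- A sequence of `ι`-tuples is indiscernible over `C`. -/
def Indiscernible (C : Set M) {ι : Type x} (b : ℕ → ι → M) : Prop :=
  ∀ (n : ℕ) (s t : Fin n → ℕ), StrictMono s → StrictMono t →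
    SameType L M C (fun p : Fin n × ι => b (s p.1) p.2) (fun p : Fin n × ι => b (t p.1) p.2)

/-- The formula `φ(x, b)` divides over `C`:  there is a `C`-indiscernible sequence starting
with `b` along which the instances of `φ` are `k`-inconsistent. -/
def FormulaDividesOver (C : Set M) {ι : Type x} {m : ℕ}
    (φ : L.Formula (ι ⊕ Fin m)) (b : Fin m → M) : Prop :=
  ∃ (bs : ℕ → Fin m → M) (k : ℕ), 0 < k ∧ bs 0 = b ∧ Indiscernible L M C bs ∧
    ∀ s : Finset ℕ, s.card = k → ¬∃ x : ι → M, ∀ i ∈ s, φ.Realize (Sum.elim x (bs i))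

/-- The complete type of the tuple `a` over the parameter set `B` divides over `C`. -/
def TypeDividesOver (C B : Set M) {ι : Type x} (a : ι → M) : Prop :=
  ∃ (m : ℕ) (φ : L.Formula (ι ⊕ Fin m)) (b : Fin m → M),
    (∀ i, b i ∈ B) ∧ φ.Realize (Sum.elim a b) ∧ FormulaDividesOver L M C φ b

/-- The complete type of the tuple `a` over the parameter set `B` forks over `C`: it implies a
finite disjunction of formulas (with arbitrary parameters), each of which divides over `C`. -/
def TypeForksOver (C B : Set M) {ι : Type x} (a : ι → M) : Prop :=
  ∃ (N : ℕ) (m : Fin N → ℕ) (φ : ∀ j, L.Formula (ι ⊕ Fin (m j))) (b : ∀ j, Fin (m j) → M),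
    (∀ j, FormulaDividesOver L M C (φ j) (b j)) ∧
    ∀ x : ι → M, SameType L M B x a → ∃ j, (φ j).Realize (Sum.elim x (b j))

/-- Dividing independence: `A ⫝d_C B`, i.e. `tp(A/BC)` does not divide over `C`. -/
def dind (A C B : Set M) : Prop :=
  ¬TypeDividesOver L M C (B ∪ C) (fun x : A => (x : M))

/-- Forking independence: `A ⫝f_C B`, i.e. `tp(A/BC)` does not fork over `C`. -/
def find (A C B : Set M) : Prop :=
  ¬TypeForksOver L M C (B ∪ C) (fun x : A => (x : M))

/-- Algebraic independence: `A ⫝a_C B`. -/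
def aind (A C B : Set M) : Prop :=
  acl L M (A ∪ C) ∩ acl L M (B ∪ C) = acl L M C

/-- M-independence: `A ⫝M_C B`. -/
def Mind (A C B : Set M) : Prop :=
  ∀ D : Set M, C ⊆ D → D ⊆ acl L M (B ∪ C) → aind L M A D B

/-- m-independence: `A ⫝m_C B`. -/
def mind (A C B : Set M) : Prop :=
  ∀ D : Set M, C ⊆ D → D ⊆ B ∪ C → aind L M A D B

/-- `M` is a monster model (with respect to the cardinal `κ` bounding the "small" sets):
it is strongly `κ`-homogeneous and `κ`-saturated. -/
structure IsMonster (κ : Cardinal.{w}) : Prop where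
  aleph0_lt : ℵ₀ < κ
  homogeneous : ∀ (C : Set M) {ι : Type w} (a b : ι → M), #C < κ → #ι < κ →
    SameType L M C a b → ∃ σ : M ≃[L] M, (∀ c ∈ C, σ c = c) ∧ ∀ i, σ (a i) = b i
  saturated : ∀ (C : Set M) {ι : Type w}, #C < κ → #ι < κ →
    ∀ p : Set ((n : ℕ) × L.Formula (ι ⊕ Fin n) × (Fin n → M)),
      (∀ q ∈ p, ∀ i, q.2.2 i ∈ C) →
      (∀ s : Finset ((n : ℕ) × L.Formula (ι ⊕ Fin n) × (Fin n → M)), ↑s ⊆ p →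
        ∃ x : ι → M, ∀ q ∈ s, q.2.1.Realize (Sum.elim x q.2.2)) →
      ∃ x : ι → M, ∀ q ∈ p, q.2.1.Realize (Sum.elim x q.2.2)


/-! ### Properties of abstract ternary relations -/

variable {w' : Type}

/-- `ind` is invariant under automorphisms of the monster model. -/
def Invariant (ind : Set M → Set M → Set M → Prop) : Prop :=
  ∀ (σ : M ≃[L] M) (A C B : Set M), ind A C B → ind (σ '' A) (σ '' C) (σ '' B)

/-- `ind` satisfies monotonicity. -/
def MonotoneRel (ind : Set M → Set M → Set M → Prop) : Prop :=
  ∀ A C B A' B' : Set M, A' ⊆ A → B' ⊆ B → ind A C B → ind A' C B'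

/-- `ind` satisfies base monotonicity. -/
def BaseMonotoneRel (ind : Set M → Set M → Set M → Prop) : Prop :=
  ∀ A C B D : Set M, D ⊆ B → ind A C B → ind A (C ∪ D) B

/-- `ind` has algebraic extension over `C`. -/
def AlgebraicExtensionOver (ind : Set M → Set M → Set M → Prop) (C : Set M) : Prop :=
  ∀ A B : Set M, ind A C B → ind A C (acl L M (B ∪ C))

/-- `ind` has algebraic extension. -/
def AlgebraicExtension (ind : Set M → Set M → Set M → Prop) : Prop :=
  ∀ C : Set M, AlgebraicExtensionOver L M ind C

/-- `ind` preserves algebraic closure. -/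
def PreservesAcl (ind : Set M → Set M → Set M → Prop) : Prop :=
  ∀ A B C : Set M,
    (ind A C B ↔ ind (acl L M (A ∪ C)) C B) ∧
    (ind A C B ↔ ind A C (acl L M (B ∪ C))) ∧
    (ind A C B ↔ ind A (acl L M C) B)

/-- Axiom (i): if `A ⫝_C B` then `acl(AC) ⫝_C B`. -/
def AxiomI (ind : Set M → Set M → Set M → Prop) : Prop :=
  ∀ A B C : Set M, ind A C B → ind (acl L M (A ∪ C)) C B

/-- Axiom (ii): if `A ⫝_{acl(C)} B` then `A ⫝_C B`. -/
def AxiomII (ind : Set M → Set M → Set M → Prop) : Prop :=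
  ∀ A B C : Set M, ind A (acl L M C) B → ind A C B

section

variable {L M}

lemma subset_acl (C : Set M) : C ⊆ acl L M C := by
  intro a ha
  refine ⟨1, Term.equal (Term.var 0) (Term.var 1), fun _ => a, fun _ => ha, by simp, ?_⟩
  refine (Set.finite_singleton a).subset fun x hx => ?_
  simpa using hx

lemma acl_mono {C C' : Set M} (h : C ⊆ C') : acl L M C ⊆ acl L M C' := by
  rintro a ⟨n, φ, c, hc, hφ, hfin⟩
  exact ⟨n, φ, c, fun i => h (hc i), hφ, hfin⟩

lemma subset_acl_union_left (A C : Set M) : A ⊆ acl L M (A ∪ C) :=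
  subset_union_left.trans (subset_acl _)

variable {ind : Set M → Set M → Set M → Prop}

lemma PreservesAcl.algebraicExtension (h : PreservesAcl L M ind) : AlgebraicExtension L M ind :=
  fun C A B => (h A B C).2.1.mp

lemma PreservesAcl.axiomI (h : PreservesAcl L M ind) : AxiomI L M ind :=
  fun A B C => (h A B C).1.mp

lemma PreservesAcl.axiomII (h : PreservesAcl L M ind) : AxiomII L M ind :=
  fun A B C => (h A B C).2.2.mpr

/-- Enlarge `B` to `acl(BC) ⊇ acl(C)`, move `acl(C)` into the base, then shrink back to `B`. -/
lemma ind_acl_base_of_algebraicExtension (hmono : MonotoneRel M ind)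
    (hbase : BaseMonotoneRel M ind) (hext : AlgebraicExtension L M ind) {A B C : Set M}
    (h : ind A C B) : ind A (acl L M C) B := by
  have hbig : ind A (C ∪ acl L M C) (acl L M (B ∪ C)) :=
    hbase _ _ _ _ (acl_mono subset_union_right) (hext C A B h)
  rw [union_eq_self_of_subset_left (subset_acl C)] at hbig
  exact hmono _ _ _ _ _ subset_rfl (subset_acl_union_left B C) hbig

lemma preservesAcl_of_algebraicExtension (hmono : MonotoneRel M ind)
    (hbase : BaseMonotoneRel M ind) (hext : AlgebraicExtension L M ind)
    (hI : AxiomI L M ind) (hII : AxiomII L M ind) : PreservesAcl L M ind := fun A B C =>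
  ⟨⟨hI A B C, hmono _ _ _ _ _ (subset_acl_union_left A C) subset_rfl⟩,
    ⟨hext C A B, hmono _ _ _ _ _ subset_rfl (subset_acl_union_left B C)⟩,
    ⟨ind_acl_base_of_algebraicExtension hmono hbase hext, hII A B C⟩⟩

end

theorem preservesAcl_iff_algExt_and_axioms
    (ind : Set M → Set M → Set M → Prop)
    (hmono : MonotoneRel M ind)
    (hbase : BaseMonotoneRel M ind) :
    PreservesAcl L M ind ↔
      AlgebraicExtension L M ind ∧ AxiomI L M ind ∧ AxiomII L M ind :=
  ⟨fun h => ⟨h.algebraicExtension, h.axiomI, h.axiomII⟩,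
    fun ⟨hext, hI, hII⟩ => preservesAcl_of_algebraicExtension hmono hbase hext hI hII⟩

end PaperDiv
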